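/- Let K ≥ 1 and T ≥ max(K, 2) be natural numbers. For each arm i ∈ {1, …, K}, let (X_{i,s})_{s=1}^{T} be [0,1]-valued random variables such that the whole family {X_{i,s}} is independent and, for each fixed i, the X_{i,s} are identically distributed with mean μ_i. Set μ* = max_i μ_i and Δ_i = μ* − μ_i. Define the UCB policy: in rounds t = 1, …, K play arm A_t = t; for t > K play A_t = argmax_i ( μ̂_i(t−1) + √(2 log T / N_i(t−1)) ), where N_i(t−1) is the number of rounds s ≤ t−1 with A_s = i, the reward received when arm i is pulled for the j-th time is X_{i,j}, and μ̂_i(t−1) is the empirical mean of the rewards of arm i over its first N_i(t−1) pulls. Then with probability at least 1 − 2 K T^{−3}, the realized regret satisfies Σ_{t=1}^{T} (μ* − μ_{A_t}) ≤ Σ_{i : Δ_i > 0} ( 8 log T / Δ_i + Δ_i ). -/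

import Mathlib

/-!
On the event that, for every arm `i` and every `1 ≤ n ≤ T`, the mean of the first `n` rewards of
arm `i` lies within `√(2 log T / n)` of `μ i`, optimism gives `Δᵢ < 2 √(2 log T / Nᵢ)` whenever UCB
pulls a suboptimal arm `i` after the initial round robin. Hence `Nᵢ(T) ≤ 8 log T / Δᵢ² + 1`, and
the regret `∑ᵢ Δᵢ Nᵢ(T)` is at most the claimed bound. By Hoeffding's inequality each of the `K T`
deviation events has probability at most `2 T⁻⁴`, so the event fails with probability at most
`2 K T⁻³`.
-/

open MeasureTheory ProbabilityTheory Finset Real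

noncomputable def empMean (x : ℕ → ℝ) (n : ℕ) : ℝ := (∑ j ∈ range n, x j) / n

section Hoeffding

variable {Ω : Type*} [MeasurableSpace Ω] {P : Measure Ω} [IsProbabilityMeasure P]

lemma ofReal_one_sub_le_measure_of_compl_subset {s t : Set Ω} {c : ℝ} (hts : tᶜ ⊆ s)
    (ht : P.real t ≤ c) : ENNReal.ofReal (1 - c) ≤ P s := by
  rw [← ofReal_measureReal]
  refine ENNReal.ofReal_le_ofReal ?_
  have hcover := measureReal_union_le (μ := P) t tᶜ
  rw [Set.union_compl_self, probReal_univ] at hcover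
  linarith [measureReal_mono (μ := P) hts]

variable {ι : Type*} {Y : ι → Ω → ℝ}

lemma hasSubgaussianMGF_sum_sub_integral_of_mem_Icc (hindep : iIndepFun Y P)
    (hmeas : ∀ i, Measurable (Y i)) (s : Finset ι)
    (hbdd : ∀ i ∈ s, ∀ ω, Y i ω ∈ Set.Icc (0 : ℝ) 1) :
    HasSubgaussianMGF (fun ω ↦ ∑ i ∈ s, (Y i ω - P[Y i])) (#s / 4) P := by
  have hcenter : iIndepFun (fun i ω ↦ Y i ω - P[Y i]) P :=
    hindep.comp (fun i (x : ℝ) ↦ x - ∫ ω, Y i ω ∂P) fun i ↦ by fun_prop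
  convert HasSubgaussianMGF.sum_of_iIndepFun hcenter fun i hi ↦
    hasSubgaussianMGF_of_mem_Icc (hmeas i).aemeasurable (ae_of_all _ (hbdd i hi)) using 1
  simp only [sum_const, nsmul_eq_mul]
  norm_num
  ring

lemma measureReal_abs_sum_sub_integral_ge_le_of_mem_Icc (hindep : iIndepFun Y P)
    (hmeas : ∀ i, Measurable (Y i)) (s : Finset ι)
    (hbdd : ∀ i ∈ s, ∀ ω, Y i ω ∈ Set.Icc (0 : ℝ) 1) {ε : ℝ} (hε : 0 ≤ ε) :
    P.real {ω | ε ≤ |∑ i ∈ s, (Y i ω - P[Y i])|} ≤ 2 * exp (-2 * ε ^ 2 / #s) := by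
  have hsum := hasSubgaussianMGF_sum_sub_integral_of_mem_Icc hindep hmeas s hbdd
  calc P.real {ω | ε ≤ |∑ i ∈ s, (Y i ω - P[Y i])|}
      ≤ P.real ({ω | ε ≤ ∑ i ∈ s, (Y i ω - P[Y i])} ∪
          {ω | ε ≤ -∑ i ∈ s, (Y i ω - P[Y i])}) :=
        measureReal_mono fun ω hω ↦ by
          rcases le_abs'.1 (Set.mem_ofPred.1 hω) with h | h
          exacts [Or.inr (le_neg_of_le_neg h), Or.inl h]
    _ ≤ exp (-ε ^ 2 / (2 * (#s / 4 : NNReal))) + exp (-ε ^ 2 / (2 * (#s / 4 : NNReal))) :=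
        (measureReal_union_le _ _).trans <|
          add_le_add (hsum.measure_ge_le hε) (hsum.neg.measure_ge_le hε)
    _ = 2 * exp (-2 * ε ^ 2 / #s) := by
        push_cast
        ring_nf

lemma measureReal_abs_empMean_sub_ge_le {Y : ℕ → Ω → ℝ} {n : ℕ} (hn : 0 < n)
    (hindep : iIndepFun (fun j : Fin n ↦ Y j) P) (hmeas : ∀ j < n, Measurable (Y j))
    (hbdd : ∀ j < n, ∀ ω, Y j ω ∈ Set.Icc (0 : ℝ) 1) {m : ℝ} (hmean : ∀ j < n, P[Y j] = m)
    {ε : ℝ} (hε : 0 ≤ ε) :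
    P.real {ω | ε ≤ |empMean (Y · ω) n - m|} ≤ 2 * exp (-2 * n * ε ^ 2) := by
  have hn' : (0 : ℝ) < n := by exact_mod_cast hn
  have hset : {ω | ε ≤ |empMean (Y · ω) n - m|} =
      {ω | n * ε ≤ |∑ j : Fin n, (Y j ω - P[Y j])|} := by
    ext ω
    have hsum : ∑ j : Fin n, (Y j ω - P[Y j]) = n * (empMean (Y · ω) n - m) := by
      rw [sum_congr rfl fun j _ ↦ by rw [hmean j j.isLt], Fin.sum_univ_eq_sum_range
        (fun j ↦ Y j ω - m), sum_sub_distrib, empMean]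
      simp only [sum_const, card_range, nsmul_eq_mul]
      field_simp
    rw [Set.mem_ofPred_eq, Set.mem_ofPred_eq, hsum, abs_mul, Nat.abs_cast,
      mul_le_mul_iff_of_pos_left hn']
  rw [hset]
  refine (measureReal_abs_sum_sub_integral_ge_le_of_mem_Icc hindep (fun j ↦ hmeas j j.isLt)
    univ (fun j _ ↦ hbdd j j.isLt) (by positivity)).trans_eq ?_
  rw [card_univ, Fintype.card_fin]
  field_simp

end Hoeffding

section Bandit

variable {ι : Type*} [DecidableEq ι]

def pullCount (a : ℕ → ι) (i : ι) (t : ℕ) : ℕ := #{s ∈ range t | a s = i}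

lemma pullCount_succ (a : ℕ → ι) (i : ι) (t : ℕ) :
    pullCount a i (t + 1) = pullCount a i t + if a t = i then 1 else 0 := by
  simp only [pullCount, range_add_one, filter_insert]
  split_ifs with h
  · exact card_insert_of_notMem (by simp)
  · rfl

lemma pullCount_le_self (a : ℕ → ι) (i : ι) (t : ℕ) : pullCount a i t ≤ t :=
  (card_filter_le _ _).trans_eq (card_range t)

lemma sum_range_comp_eq_sum_pullCount [Fintype ι] (a : ℕ → ι) (f : ι → ℝ) (T : ℕ) :
    ∑ t ∈ range T, f (a t) = ∑ i, pullCount a i T * f i := by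
  rw [← sum_fiberwise (range T) a]
  refine sum_congr rfl fun i _ ↦ ?_
  rw [sum_congr rfl fun t ht ↦ by rw [(mem_filter.1 ht).2], sum_const, nsmul_eq_mul, pullCount]

lemma pullCount_le_of_forall_pull {a : ℕ → ι} {i : ι} {B : ℝ} (hB : 0 ≤ B) {T : ℕ}
    (h : ∀ t < T, a t = i → (pullCount a i t : ℝ) + 1 ≤ B) : (pullCount a i T : ℝ) ≤ B := by
  induction T with
  | zero => simpa [pullCount] using hB
  | succ t ih =>
    rw [pullCount_succ]
    split_ifs with hat
    · exact_mod_cast h t t.lt_succ_self hat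
    · simpa using ih fun s hs ↦ h s (hs.trans t.lt_succ_self)

end Bandit

noncomputable def ucbRadius (T n : ℕ) : ℝ := √(2 * log T / n)

lemma ucbRadius_sq (T n : ℕ) : ucbRadius T n ^ 2 = 2 * log T / n :=
  sq_sqrt (by have := log_natCast_nonneg T; positivity)

section UCB

variable {K T : ℕ} {x : Fin K → ℕ → ℝ} {a : ℕ → Fin K} {μ : Fin K → ℝ} {μstar : ℝ}

noncomputable def ucbIndex (x : Fin K → ℕ → ℝ) (a : ℕ → Fin K) (T : ℕ) (i : Fin K) (t : ℕ) : ℝ :=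
  empMean (x i) (pullCount a i t) + ucbRadius T (pullCount a i t)

def WithinUCBRadius (x : Fin K → ℕ → ℝ) (μ : Fin K → ℝ) (T : ℕ) : Prop :=
  ∀ i n, 1 ≤ n → n ≤ T → |empMean (x i) n - μ i| < ucbRadius T n

structure IsUCBPolicy (x : Fin K → ℕ → ℝ) (T : ℕ) (a : ℕ → Fin K) : Prop where
  init : ∀ t (ht : t < K), a t = ⟨t, ht⟩
  select : ∀ t, K ≤ t → t < T → ∀ i, ucbIndex x a T i t ≤ ucbIndex x a T (a t) t

namespace IsUCBPolicy

lemma pullCount_eq_zero (ha : IsUCBPolicy x T a) {t : ℕ} (ht : t < K) :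
    pullCount a (a t) t = 0 := by
  refine card_eq_zero.2 (filter_eq_empty_iff.2 fun s hs hst ↦ ?_)
  rw [ha.init t ht, ha.init s ((mem_range.1 hs).trans ht)] at hst
  exact (mem_range.1 hs).ne (Fin.mk.inj hst)

lemma one_le_pullCount (ha : IsUCBPolicy x T a) (i : Fin K) {t : ℕ} (ht : K ≤ t) :
    1 ≤ pullCount a i t :=
  card_pos.2 ⟨i, mem_filter.2 ⟨mem_range.2 (i.isLt.trans_le ht), ha.init i i.isLt⟩⟩

lemma pullCount_mul_sq_lt (ha : IsUCBPolicy x T a) (hstar : IsGreatest (Set.range μ) μstar)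
    (hacc : WithinUCBRadius x μ T)
    {t : ℕ} (hKt : K ≤ t) (htT : t < T) {i : Fin K} (hgap : 0 ≤ μstar - μ i) (hat : a t = i) :
    pullCount a i t * (μstar - μ i) ^ 2 < 8 * log T := by
  obtain ⟨istar, rfl⟩ := hstar.1
  have hacc_at (j : Fin K) := abs_lt.1 <| hacc j (pullCount a j t) (ha.one_le_pullCount j hKt)
    ((pullCount_le_self a j t).trans htT.le)
  have hsel := ha.select t hKt htT istar
  rw [hat] at hsel
  set n := pullCount a i t
  -- optimism: `μ⋆` is below the index of the optimal arm, which is below that of arm `i`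
  have hgap_lt : μ istar - μ i < 2 * ucbRadius T n := by
    unfold ucbIndex at hsel
    linarith [(hacc_at istar).1, (hacc_at i).2]
  have hn : (0 : ℝ) < n := by exact_mod_cast ha.one_le_pullCount i hKt
  calc n * (μ istar - μ i) ^ 2 < n * (2 * ucbRadius T n) ^ 2 := by gcongr
    _ = 8 * log T := by rw [mul_pow, ucbRadius_sq]; field_simp; ring

lemma pullCount_le (ha : IsUCBPolicy x T a) (hstar : IsGreatest (Set.range μ) μstar)
    (hacc : WithinUCBRadius x μ T)
    {i : Fin K} (hgap : 0 < μstar - μ i) :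
    (pullCount a i T : ℝ) ≤ 8 * log T / (μstar - μ i) ^ 2 + 1 := by
  have hlog := log_natCast_nonneg T
  refine pullCount_le_of_forall_pull (by positivity) fun t htT hat ↦ ?_
  rcases lt_or_ge t K with htK | hKt
  · rw [← hat, ha.pullCount_eq_zero htK]
    simp only [CharP.cast_eq_zero, zero_add, le_add_iff_nonneg_left]
    positivity
  · have := ha.pullCount_mul_sq_lt hstar hacc hKt htT hgap.le hat
    rw [add_le_add_iff_right, le_div_iff₀ (by positivity)]
    exact this.le

theorem regret_le (ha : IsUCBPolicy x T a) (hstar : IsGreatest (Set.range μ) μstar)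
    (hacc : WithinUCBRadius x μ T) :
    ∑ t ∈ range T, (μstar - μ (a t)) ≤
      ∑ i ∈ univ.filter (fun i : Fin K ↦ 0 < μstar - μ i),
        (8 * log T / (μstar - μ i) + (μstar - μ i)) := by
  have hsupp (i : Fin K) (_ : i ∈ univ) (hi : (pullCount a i T : ℝ) * (μstar - μ i) ≠ 0) :
      0 < μstar - μ i :=
    sub_pos.2 <| (hstar.2 (Set.mem_range_self i)).lt_of_ne'
      (sub_ne_zero.1 (right_ne_zero_of_mul hi))
  rw [sum_range_comp_eq_sum_pullCount a (fun i ↦ μstar - μ i), ← sum_filter_of_ne hsupp]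
  refine sum_le_sum fun i hi ↦ ?_
  have hgap := (mem_filter.1 hi).2
  calc (pullCount a i T : ℝ) * (μstar - μ i)
      ≤ (8 * log T / (μstar - μ i) ^ 2 + 1) * (μstar - μ i) := by
        gcongr; exact ha.pullCount_le hstar hacc hgap
    _ = 8 * log T / (μstar - μ i) + (μstar - μ i) := by field_simp

end IsUCBPolicy

end UCB

section UCBConcentration

variable {Ω : Type*} [MeasurableSpace Ω] {P : Measure Ω} [IsProbabilityMeasure P]

lemma measureReal_abs_empMean_sub_ge_ucbRadius_le {K T : ℕ} {X : Fin K → ℕ → Ω → ℝ}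
    {μ : Fin K → ℝ} (hmeas : ∀ i s, Measurable (X i s))
    (hbdd : ∀ i, ∀ s < T, ∀ ω, X i s ω ∈ Set.Icc (0 : ℝ) 1)
    (hindep : iIndepFun (fun p : Fin K × Fin T => X p.1 p.2) P)
    (hmean : ∀ i, ∀ s < T, ∫ ω, X i s ω ∂P = μ i) (i : Fin K) {n : ℕ} (hn : 1 ≤ n)
    (hnT : n ≤ T) :
    P.real {ω | ucbRadius T n ≤ |empMean (X i · ω) n - μ i|} ≤ 2 * ((T : ℝ) ^ 4)⁻¹ := by
  have hT : (0 : ℝ) < T := by exact_mod_cast hn.trans hnT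
  have hindep_i : iIndepFun (fun j : Fin n ↦ X i j) P :=
    hindep.precomp (g := fun j ↦ (i, Fin.castLE hnT j)) fun j k hjk ↦
      Fin.castLE_injective hnT (Prod.ext_iff.1 hjk).2
  refine (measureReal_abs_empMean_sub_ge_le hn hindep_i (fun j _ ↦ hmeas i j)
    (fun j hj ↦ hbdd i j (hj.trans_le hnT)) (fun j hj ↦ hmean i j (hj.trans_le hnT))
    (ε := ucbRadius T n) (sqrt_nonneg _)).trans_eq ?_
  have hn' : (0 : ℝ) < n := by exact_mod_cast hn
  rw [mul_assoc, ucbRadius_sq, show -2 * (n * (2 * log T / n)) = -(4 * log T) by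
    field_simp; ring, exp_neg, show (4 : ℝ) * log T = log (T ^ 4) by rw [log_pow]; norm_num,
    exp_log (by positivity)]

lemma measureReal_not_withinUCBRadius_le {K T : ℕ} {X : Fin K → ℕ → Ω → ℝ}
    {μ : Fin K → ℝ} (hmeas : ∀ i s, Measurable (X i s))
    (hbdd : ∀ i, ∀ s < T, ∀ ω, X i s ω ∈ Set.Icc (0 : ℝ) 1)
    (hindep : iIndepFun (fun p : Fin K × Fin T => X p.1 p.2) P)
    (hmean : ∀ i, ∀ s < T, ∫ ω, X i s ω ∂P = μ i) :
    P.real {ω | ¬ WithinUCBRadius (fun i j ↦ X i j ω) μ T} ≤ 2 * K * ((T : ℝ) ^ 3)⁻¹ := by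
  have hcover : {ω | ¬ WithinUCBRadius (fun i j ↦ X i j ω) μ T} ⊆
      ⋃ i, ⋃ n ∈ Icc 1 T, {ω | ucbRadius T n ≤ |empMean (X i · ω) n - μ i|} := fun ω hω ↦ by
    simp only [WithinUCBRadius, Set.mem_ofPred_eq, not_forall, not_lt] at hω
    obtain ⟨i, n, hn, hnT, hdev⟩ := hω
    exact Set.mem_iUnion.2 ⟨i, Set.mem_iUnion₂.2 ⟨n, mem_Icc.2 ⟨hn, hnT⟩, hdev⟩⟩
  calc _ ≤ ∑ i, ∑ n ∈ Icc 1 T, P.real {ω | ucbRadius T n ≤ |empMean (X i · ω) n - μ i|} :=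
        (measureReal_mono hcover).trans <| (measureReal_iUnion_fintype_le _).trans
          (sum_le_sum fun i _ ↦ measureReal_biUnion_finset_le _ _)
    _ ≤ ∑ i : Fin K, ∑ n ∈ Icc 1 T, 2 * ((T : ℝ) ^ 4)⁻¹ :=
        sum_le_sum fun i _ ↦ sum_le_sum fun n hn ↦
          measureReal_abs_empMean_sub_ge_ucbRadius_le hmeas hbdd hindep hmean i
            (mem_Icc.1 hn).1 (mem_Icc.1 hn).2
    _ = 2 * K * ((T : ℝ) ^ 3)⁻¹ := by
        simp only [sum_const, Nat.card_Icc, add_tsub_cancel_right, card_univ, Fintype.card_fin,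
          nsmul_eq_mul]
        rcases T.eq_zero_or_pos with rfl | hT
        · simp
        · field_simp

end UCBConcentration

theorem stmt_7_general {Ω : Type*} [MeasurableSpace Ω] (P : Measure Ω) [IsProbabilityMeasure P]
    (K T : ℕ)
    (X : Fin K → ℕ → Ω → ℝ) (μ : Fin K → ℝ) (μstar : ℝ)
    (hstar : IsGreatest (Set.range μ) μstar)
    (hmeas : ∀ i s, Measurable (X i s))
    (hbdd : ∀ i, ∀ s < T, ∀ ω, X i s ω ∈ Set.Icc (0 : ℝ) 1)
    (hindep : iIndepFun
      (fun p : Fin K × Fin T => X p.1 p.2) P)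
    (hmean : ∀ i, ∀ s < T, ∫ ω, X i s ω ∂P = μ i)
    -- the policy: `A t ω` is the arm played in round `t` (rounds are `0, …, T-1`)
    (A : ℕ → Ω → Fin K)
    -- `N i t ω` is the number of pulls of arm `i` before round `t`
    (N : Fin K → ℕ → Ω → ℕ)
    (hN : ∀ i t ω, N i t ω = ((Finset.range t).filter (fun s => A s ω = i)).card)
    -- `muhat i t ω` is the empirical mean of the rewards of arm `i` before round `t`
    (muhat : Fin K → ℕ → Ω → ℝ)
    (hmuhat : ∀ i t ω, muhat i t ω = (∑ j ∈ Finset.range (N i t ω), X i j ω) / N i t ω)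
    -- initialization: in the first `K` rounds each arm is played once
    (hinit : ∀ (t : ℕ) (ω : Ω) (ht : t < K), A t ω = ⟨t, ht⟩)
    -- afterwards the policy maximizes the UCB index
    (hselect : ∀ t ω, K ≤ t → t < T → ∀ i : Fin K,
      muhat i t ω + Real.sqrt (2 * Real.log T / N i t ω) ≤
        muhat (A t ω) t ω + Real.sqrt (2 * Real.log T / N (A t ω) t ω)) :
    ENNReal.ofReal (1 - 2 * K * ((T : ℝ) ^ 3)⁻¹) ≤
      P {ω | ∑ t ∈ Finset.range T, (μstar - μ (A t ω)) ≤
        ∑ i ∈ univ.filter (fun i : Fin K => 0 < μstar - μ i),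
          (8 * Real.log T / (μstar - μ i) + (μstar - μ i))} := by
  have hpolicy (ω : Ω) : IsUCBPolicy (fun i j ↦ X i j ω) T (fun t ↦ A t ω) := by
    refine ⟨fun t ht ↦ hinit t ω ht, fun t hKt htT i ↦ ?_⟩
    have hsel := hselect t ω hKt htT i
    simp only [hmuhat, hN] at hsel
    exact hsel
  exact ofReal_one_sub_le_measure_of_compl_subset
    (fun ω hω ↦ (hpolicy ω).regret_le hstar (not_not.1 hω))
    (measureReal_not_withinUCBRadius_le hmeas hbdd hindep hmean)

/-- High-probability regret bound for the UCB policy.  There are `K` arms; the reward of the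
`(j+1)`-st pull of arm `i` is `X i j`, where the family `{X i s : i < K, s < T}` is
independent, `[0,1]`-valued, and for each fixed `i` identically distributed with mean `μ i`.
The policy `A` plays each arm once in the first `K` rounds (`A t = t` for `t < K`) and
afterwards maximizes the UCB index `μ̂ᵢ + √(2 log T / Nᵢ)`, where `Nᵢ` is the number of past
pulls of arm `i` and `μ̂ᵢ` the empirical mean of its past rewards.  Then with probability at
least `1 - 2 K T⁻³` the realized regret over `T` rounds is at most
`∑_{i : Δᵢ > 0} (8 log T / Δᵢ + Δᵢ)`, where `Δᵢ = μ⋆ - μᵢ` and `μ⋆ = maxᵢ μᵢ`. -/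
theorem stmt_7 {Ω : Type*} [MeasurableSpace Ω] (P : Measure Ω) [IsProbabilityMeasure P]
    (K T : ℕ) (hK : 1 ≤ K) (hT : max K 2 ≤ T)
    (X : Fin K → ℕ → Ω → ℝ) (μ : Fin K → ℝ) (μstar : ℝ)
    (hstar : IsGreatest (Set.range μ) μstar)
    (hmeas : ∀ i s, Measurable (X i s))
    (hbdd : ∀ i, ∀ s < T, ∀ ω, X i s ω ∈ Set.Icc (0 : ℝ) 1)
    (hindep : iIndepFun
      (fun p : Fin K × Fin T => X p.1 p.2) P)
    (hident : ∀ i, ∀ s < T, ∀ s' < T, IdentDistrib (X i s) (X i s') P P)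
    (hmean : ∀ i, ∀ s < T, ∫ ω, X i s ω ∂P = μ i)
    -- the policy: `A t ω` is the arm played in round `t` (rounds are `0, …, T-1`)
    (A : ℕ → Ω → Fin K)
    -- `N i t ω` is the number of pulls of arm `i` before round `t`
    (N : Fin K → ℕ → Ω → ℕ)
    (hN : ∀ i t ω, N i t ω = ((Finset.range t).filter (fun s => A s ω = i)).card)
    -- `muhat i t ω` is the empirical mean of the rewards of arm `i` before round `t`
    (muhat : Fin K → ℕ → Ω → ℝ)
    (hmuhat : ∀ i t ω, muhat i t ω = (∑ j ∈ Finset.range (N i t ω), X i j ω) / N i t ω)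
    -- initialization: in the first `K` rounds each arm is played once
    (hinit : ∀ (t : ℕ) (ω : Ω) (ht : t < K), A t ω = ⟨t, ht⟩)
    -- afterwards the policy maximizes the UCB index
    (hselect : ∀ t ω, K ≤ t → t < T → ∀ i : Fin K,
      muhat i t ω + Real.sqrt (2 * Real.log T / N i t ω) ≤
        muhat (A t ω) t ω + Real.sqrt (2 * Real.log T / N (A t ω) t ω)) :
    ENNReal.ofReal (1 - 2 * K * ((T : ℝ) ^ 3)⁻¹) ≤
      P {ω | ∑ t ∈ Finset.range T, (μstar - μ (A t ω)) ≤
        ∑ i ∈ univ.filter (fun i : Fin K => 0 < μstar - μ i),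
          (8 * Real.log T / (μstar - μ i) + (μstar - μ i))} :=
  stmt_7_general P K T X μ μstar hstar hmeas hbdd hindep hmean A N hN muhat hmuhat hinit hselect
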